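/- arXiv:0709.1679 — 4 statements merged into one kernel-verified Lean document; each statement's English description precedes it below -/
import Mathlib

section
/- Among all trees on n ≥ 2 vertices, the star K_{1,n-1} uniquely minimizes the Wiener index, with value (n-1)^2. -/
/-- The Wiener index of a finite graph. -/
noncomputable def wiener {V : Type*} [Fintype V] (G : SimpleGraph V) : ℕ :=
  (∑ u : V, ∑ v : V, G.dist u v) / 2

/-- The star `K_{1,n-1}` on `Fin n`, with center `0`. -/
def starGraph (n : ℕ) [NeZero n] : SimpleGraph (Fin n) where
  Adj u v := u ≠ v ∧ (u = 0 ∨ v = 0)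
  symm := ⟨fun u v ⟨h1, h2⟩ => ⟨h1.symm, h2.symm⟩⟩
  loopless := ⟨fun u ⟨h, _⟩ => h rfl⟩

/-!
For `u ≠ v` in a connected graph, `d(u, v) ≥ 2 - [u ~ v]`, with equality exactly when
`d(u, v) ≤ 2`. Summing over ordered pairs, `2 σ(G) ≥ 2 n (n - 1) - 2 |E|`, which for a tree
(`|E| = n - 1`) reads `σ(G) ≥ (n - 1)²`, with equality iff `G` has diameter at most two. The star
attains this, and a tree of diameter at most two is a star: the neighbour of a leaf is adjacent to
every other vertex, and no further edge fits in without a triangle.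
-/

open Finset

theorem Fintype.sum_sum_ite_eq_zero {V : Type*} [Fintype V] [DecidableEq V] (a : ℕ) :
    ∑ u : V, ∑ v : V, (if u = v then 0 else a) = Fintype.card V * (Fintype.card V - 1) * a := by
  simp [sum_ite, ← ne_eq, filter_ne, card_univ]
  ring

theorem Fintype.even_sum_sum_of_symm {V : Type*} [Fintype V] {f : V → V → ℕ}
    (hsymm : ∀ u v, f u v = f v u) (hdiag : ∀ u, f u u = 0) : Even (∑ u, ∑ v, f u v) := by
  rw [← ZMod.natCast_eq_zero_iff_even, ← Fintype.sum_prod_type', Nat.cast_sum]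
  refine sum_involution (fun x _ ↦ x.swap) (fun x _ ↦ ?_) (fun x _ hx hswap ↦ ?_)
    (fun _ _ ↦ mem_univ _) (fun x _ ↦ x.swap_swap)
  · rw [Prod.fst_swap, Prod.snd_swap, hsymm x.2, CharTwo.add_self_eq_zero]
  · obtain ⟨u, v⟩ := x
    obtain rfl : v = u := congrArg Prod.fst hswap
    simp [hdiag] at hx

namespace SimpleGraph

variable {V : Type*} {G : SimpleGraph V}

theorem sum_sum_ite_adj [Fintype V] [DecidableRel G.Adj] :
    ∑ u : V, ∑ v : V, (if G.Adj u v then 1 else 0) = 2 * #G.edgeFinset := by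
  rw [← sum_degrees_eq_twice_card_edges]
  refine sum_congr rfl fun u _ ↦ ?_
  rw [sum_boole, ← card_neighborFinset_eq_degree, neighborFinset_eq_filter]
  simp

section Connected

variable [DecidableEq V] [DecidableRel G.Adj]

theorem Connected.ite_ne_le_dist_add_ite (hG : G.Connected) (u v : V) :
    (if u = v then 0 else 2) ≤ G.dist u v + if G.Adj u v then 1 else 0 := by
  by_cases huv : u = v
  · simp [huv]
  by_cases hadj : G.Adj u v
  · simp [huv, hadj, dist_eq_one_iff_adj.mpr hadj]
  · simpa [huv, hadj, Nat.succ_le_iff] using hG.one_lt_dist_of_ne_of_not_adj huv hadj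

theorem Connected.ite_ne_eq_dist_add_ite_iff (hG : G.Connected) (u v : V) :
    (if u = v then 0 else 2) = (G.dist u v + if G.Adj u v then 1 else 0) ↔ G.dist u v ≤ 2 := by
  by_cases huv : u = v
  · simp [huv]
  by_cases hadj : G.Adj u v
  · simp [huv, hadj, dist_eq_one_iff_adj.mpr hadj]
  · have := hG.one_lt_dist_of_ne_of_not_adj huv hadj
    simp only [huv, hadj, if_false]
    omega

variable [Fintype V]

theorem Connected.card_mul_card_sub_one_mul_two_le (hG : G.Connected) :
    Fintype.card V * (Fintype.card V - 1) * 2 ≤ ∑ u, ∑ v, G.dist u v + 2 * #G.edgeFinset := by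
  simp only [← Fintype.sum_sum_ite_eq_zero, ← sum_sum_ite_adj, ← sum_add_distrib]
  exact sum_le_sum fun u _ ↦ sum_le_sum fun v _ ↦ hG.ite_ne_le_dist_add_ite u v

theorem Connected.card_mul_card_sub_one_mul_two_eq_iff (hG : G.Connected) :
    Fintype.card V * (Fintype.card V - 1) * 2 = ∑ u, ∑ v, G.dist u v + 2 * #G.edgeFinset ↔
      ∀ u v, G.dist u v ≤ 2 := by
  simp only [← Fintype.sum_sum_ite_eq_zero, ← sum_sum_ite_adj, ← sum_add_distrib]
  rw [sum_eq_sum_iff_of_le fun u _ ↦ sum_le_sum fun v _ ↦ hG.ite_ne_le_dist_add_ite u v]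
  refine forall_congr' fun u ↦ ?_
  rw [sum_eq_sum_iff_of_le fun v _ ↦ hG.ite_ne_le_dist_add_ite u v]
  simp only [mem_univ, true_implies, hG.ite_ne_eq_dist_add_ite_iff]

end Connected

theorem IsUniversal.dist_le_one {c : V} (hc : G.IsUniversal c) (v : V) : G.dist c v ≤ 1 := by
  by_cases hcv : c = v
  · simp [hcv]
  · exact (dist_eq_one_iff_adj.mpr (hc hcv)).le

theorem IsUniversal.dist_le_two {c : V} (hc : G.IsUniversal c) (u v : V) : G.dist u v ≤ 2 :=
  calc G.dist u v ≤ G.dist u c + G.dist c v := (Connected.of_isUniversal hc).dist_triangle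
    _ = G.dist c u + G.dist c v := by rw [dist_comm]
    _ ≤ 1 + 1 := add_le_add (hc.dist_le_one u) (hc.dist_le_one v)

/-- Every vertex other than `ℓ` and `c` is at distance two from the leaf `ℓ`, through its only
neighbour `c`. -/
theorem Connected.isUniversal_of_dist_le_two (hG : G.Connected) (hdist : ∀ u v, G.dist u v ≤ 2)
    {ℓ c : V} (hℓc : G.Adj ℓ c) (hℓ : ∀ w, G.Adj ℓ w → w = c) : G.IsUniversal c := by
  intro v hcv
  by_cases hvℓ : v = ℓ
  · exact hvℓ ▸ hℓc.symm
  have hnadj : ¬G.Adj ℓ v := fun h ↦ hcv (hℓ v h).symm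
  have hdist2 : G.dist ℓ v = 2 := by
    have := hG.one_lt_dist_of_ne_of_not_adj (Ne.symm hvℓ) hnadj
    have := hdist ℓ v
    omega
  have hedist2 : G.edist ℓ v = 2 := by rw [← (hG ℓ v).coe_dist_eq_edist, hdist2]; rfl
  obtain ⟨m, hm⟩ := (edist_eq_two_iff.mp hedist2).2.2
  rw [mem_commonNeighbors] at hm
  exact hℓ m hm.1 ▸ hm.2.symm

theorem IsAcyclic.eq_starGraph_of_isUniversal {c : V} (hG : G.IsAcyclic) (hc : G.IsUniversal c) :
    G = starGraph c := by
  classical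
  ext u v
  rw [starGraph_adj]
  constructor
  · refine fun huv ↦ ⟨huv.ne, ?_⟩
    by_contra! h
    exact hG.cliqueFree le_rfl {u, v, c}
      (is3Clique_triple_iff.mpr ⟨huv, (hc (Ne.symm h.1)).symm, (hc (Ne.symm h.2)).symm⟩)
  · rintro ⟨huv, rfl | rfl⟩
    · exact hc huv
    · exact (hc (Ne.symm huv)).symm

def Iso.starGraphSwap [DecidableEq V] (r s : V) : starGraph r ≃g starGraph s where
  toEquiv := Equiv.swap r s
  map_rel_iff' := by simp [Equiv.swap_apply_eq_iff]

section Finite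

variable [Fintype V]

theorem IsTree.exists_eq_starGraph_of_dist_le_two [Nontrivial V] (hG : G.IsTree)
    (hdist : ∀ u v, G.dist u v ≤ 2) : ∃ c, G = starGraph c := by
  classical
  obtain ⟨ℓ, hℓ⟩ := hG.exists_vert_degree_one_of_nontrivial
  obtain ⟨c, hℓc, hc⟩ := degree_eq_one_iff_existsUnique_adj.mp hℓ
  exact ⟨c, hG.isAcyclic.eq_starGraph_of_isUniversal
    (hG.connected.isUniversal_of_dist_le_two hdist hℓc hc)⟩

theorem two_mul_wiener (G : SimpleGraph V) : 2 * wiener G = ∑ u, ∑ v, G.dist u v :=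
  Nat.two_mul_div_two_of_even <|
    Fintype.even_sum_sum_of_symm (fun _ _ ↦ dist_comm) fun _ ↦ dist_self

theorem IsTree.sq_le_wiener (hG : G.IsTree) : (Fintype.card V - 1) ^ 2 ≤ wiener G := by
  classical
  have h := hG.connected.card_mul_card_sub_one_mul_two_le
  rw [← two_mul_wiener, ← hG.card_edgeFinset, Nat.add_sub_cancel] at h
  rw [← hG.card_edgeFinset, Nat.add_sub_cancel]
  nlinarith

theorem IsTree.wiener_eq_iff (hG : G.IsTree) :
    wiener G = (Fintype.card V - 1) ^ 2 ↔ ∀ u v, G.dist u v ≤ 2 := by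
  classical
  rw [← hG.connected.card_mul_card_sub_one_mul_two_eq_iff, ← two_mul_wiener,
    ← hG.card_edgeFinset, Nat.add_sub_cancel]
  constructor <;> intro h <;> nlinarith

end Finite

end SimpleGraph

open SimpleGraph in
theorem starGraph_eq_starGraph_zero (n : ℕ) [NeZero n] : _root_.starGraph n = starGraph 0 := by
  ext
  rfl

/-- Among all trees on `n ≥ 2` vertices, the star `K_{1,n-1}` uniquely
minimizes the Wiener index, with value `(n-1)²`. -/
theorem star_unique_min_wiener (n : ℕ) (hn : 2 ≤ n) [NeZero n]
    (T : SimpleGraph (Fin n)) (hT : T.IsTree) :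
    wiener (starGraph n) = (n - 1) ^ 2 ∧
    wiener (starGraph n) ≤ wiener T ∧
    (wiener T = wiener (starGraph n) → Nonempty (T ≃g starGraph n)) := by
  have hstar := starGraph_eq_starGraph_zero n
  have hW : wiener (starGraph n) = (n - 1) ^ 2 := by
    simpa [hstar] using (SimpleGraph.isTree_starGraph (0 : Fin n)).wiener_eq_iff.mpr
      (SimpleGraph.isUniversal_starGraph_self.dist_le_two)
  refine ⟨hW, hW ▸ by simpa using hT.sq_le_wiener, fun heq ↦ ?_⟩
  have : Nontrivial (Fin n) := Fin.nontrivial_iff_two_le.mpr hn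
  obtain ⟨c, rfl⟩ := hT.exists_eq_starGraph_of_dist_le_two
    (hT.wiener_eq_iff.mp (by simpa [hW] using heq))
  exact hstar ▸ ⟨SimpleGraph.Iso.starGraphSwap c 0⟩
end

section
/- Among all trees on n ≥ 2 vertices, the path P_n uniquely maximizes the Wiener index, with value C(n+1, 3) = n(n^2-1)/6. -/
open Finset

namespace Finset

variable {α : Type*} {f : α → ℕ} {s : Finset α}

lemma lt_card_of_isLowerSet_image (hf : IsLowerSet (f '' s)) {a : α} (ha : a ∈ s) :
    f a < #s := by
  classical
  have hsub : range (f a + 1) ⊆ s.image f := fun k hk => by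
    rw [← mem_coe, coe_image]
    exact hf (Nat.lt_succ_iff.mp (mem_range.mp hk)) (Set.mem_image_of_mem f ha)
  simpa using (card_le_card hsub).trans card_image_le

lemma sum_le_choose_two_and_injOn_of_isLowerSet_image (hf : IsLowerSet (f '' s)) :
    ∑ a ∈ s, f a ≤ (#s).choose 2 ∧ (∑ a ∈ s, f a = (#s).choose 2 → Set.InjOn f s) := by
  classical
  induction s using Finset.induction_on_max_value f with
  | empty => simp
  | insert a s ha hmax ih =>
    have hf' : IsLowerSet (f '' s) := by
      rintro _ k hk ⟨x, hx, rfl⟩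
      obtain ⟨y, hy, rfl⟩ := hf hk (Set.mem_image_of_mem f (mem_insert_of_mem hx))
      rcases mem_insert.mp hy with rfl | hy
      · exact ⟨x, hx, le_antisymm (hmax x hx) hk⟩
      · exact ⟨y, hy, rfl⟩
    have hfa : f a < #s + 1 :=
      card_insert_of_notMem ha ▸ lt_card_of_isLowerSet_image hf (mem_insert_self a s)
    obtain ⟨ih_le, ih_inj⟩ := ih hf'
    have hchoose : (#s + 1).choose 2 = #s + (#s).choose 2 := by
      rw [Nat.choose_succ_succ', Nat.choose_one_right]
    rw [sum_insert ha, card_insert_of_notMem ha, hchoose]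
    refine ⟨by omega, fun heq => ?_⟩
    rw [coe_insert, Set.injOn_insert (by exact_mod_cast ha)]
    refine ⟨ih_inj (by omega), ?_⟩
    rintro ⟨x, hx, hxa⟩
    have := lt_card_of_isLowerSet_image hf' hx
    omega

end Finset

lemma Nat.sum_range_dist (n : ℕ) : ∑ j ∈ range n, Nat.dist n j = (n + 1).choose 2 := by
  induction n with
  | zero => simp
  | succ n ih =>
    rw [sum_range_succ', Nat.choose_succ_succ', Nat.choose_one_right, ← ih]
    simp [Nat.dist, add_comm]

lemma Nat.sum_range_sum_range_dist (n : ℕ) :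
    ∑ i ∈ range n, ∑ j ∈ range n, Nat.dist i j = 2 * (n + 1).choose 3 := by
  induction n with
  | zero => rfl
  | succ n ih =>
    have hchoose : (n + 1 + 1).choose 3 = (n + 1).choose 2 + (n + 1).choose 3 :=
      Nat.choose_succ_succ' _ 2
    simp only [sum_range_succ, sum_add_distrib, ih, Nat.dist_comm _ n, Nat.sum_range_dist,
      Nat.dist_self]
    omega

namespace SimpleGraph

variable {V W : Type*} {G : SimpleGraph V}

lemma Reachable.dist_map_le {G' : SimpleGraph W} (f : G →g G') {u v : V} (h : G.Reachable u v) :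
    G'.dist (f u) (f v) ≤ G.dist u v := by
  obtain ⟨p, hp⟩ := h.exists_walk_length_eq_dist
  exact (dist_le (p.map f)).trans_eq (by rw [Walk.length_map, hp])

lemma Walk.dist_getVert_of_length_eq_dist {u v : V} (p : G.Walk u v)
    (hp : p.length = G.dist u v) {k : ℕ} (hk : k ≤ p.length) : G.dist u (p.getVert k) = k := by
  rw [← length_eq_dist_of_subwalk hp (p.isSubwalk_take k), Walk.take_length]
  omega

lemma Connected.isLowerSet_range_dist (hG : G.Connected) (u : V) :
    IsLowerSet (Set.range (G.dist u)) := by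
  rintro _ k hk ⟨v, rfl⟩
  obtain ⟨p, hp⟩ := hG.exists_walk_length_eq_dist u v
  exact ⟨p.getVert k, p.dist_getVert_of_length_eq_dist hp (hp ▸ hk)⟩

lemma Connected.adj_of_injective_dist (hG : G.Connected) {ℓ u v : V}
    (hinj : Function.Injective (G.dist ℓ)) (h : G.dist ℓ v = G.dist ℓ u + 1) : G.Adj u v := by
  obtain ⟨p, hp⟩ := hG.exists_walk_length_eq_dist ℓ v
  have hu : p.getVert (G.dist ℓ u) = u := hinj (p.dist_getVert_of_length_eq_dist hp (by omega))
  have hv : p.getVert (G.dist ℓ u + 1) = v := by rw [← h, ← hp, Walk.getVert_length]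
  have hlt : G.dist ℓ u < p.length := by omega
  simpa only [hu, hv] using p.adj_getVert_succ hlt

section Fintype

variable [Fintype V]

lemma Connected.dist_lt_card (hG : G.Connected) (u v : V) : G.dist u v < Fintype.card V :=
  lt_card_of_isLowerSet_image (s := univ) (by simpa using hG.isLowerSet_range_dist u)
    (mem_univ v)

lemma Connected.sum_dist_le_choose_two (hG : G.Connected) (u : V) :
    ∑ v, G.dist u v ≤ (Fintype.card V).choose 2 :=
  (sum_le_choose_two_and_injOn_of_isLowerSet_image (s := univ)
    (by simpa using hG.isLowerSet_range_dist u)).1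

lemma Connected.injective_dist_of_sum_dist_eq (hG : G.Connected) {u : V}
    (h : ∑ v, G.dist u v = (Fintype.card V).choose 2) : Function.Injective (G.dist u) := by
  simpa using (sum_le_choose_two_and_injOn_of_isLowerSet_image (s := univ)
    (by simpa using hG.isLowerSet_range_dist u)).2 h

lemma sum_sum_dist_le_induce_compl_singleton [DecidableEq V] {ℓ : V}
    (hℓ : (G.induce {ℓ}ᶜ).Connected) :
    ∑ u, ∑ v, G.dist u v ≤
      ∑ u : ↥({ℓ}ᶜ : Set V), ∑ v : ↥({ℓ}ᶜ : Set V), (G.induce {ℓ}ᶜ).dist u v +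
        2 * ∑ v, G.dist ℓ v := by
  have hmem : ∀ x, x ∈ univ.erase ℓ ↔ x ∈ ({ℓ}ᶜ : Set V) := by simp
  have hsplit (F : V → ℕ) : ∑ u, F u = F ℓ + ∑ u ∈ univ.erase ℓ, F u :=
    (add_sum_erase _ _ (mem_univ ℓ)).symm
  have hcol : ∑ u ∈ univ.erase ℓ, G.dist u ℓ ≤ ∑ v, G.dist ℓ v := by
    simp only [dist_comm (u := _) (v := ℓ)]
    exact sum_le_sum_of_subset (erase_subset ℓ univ)
  have hrest : ∑ u ∈ univ.erase ℓ, ∑ v ∈ univ.erase ℓ, G.dist u v ≤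
      ∑ u : ↥({ℓ}ᶜ : Set V), ∑ v : ↥({ℓ}ᶜ : Set V), (G.induce {ℓ}ᶜ).dist u v := by
    rw [sum_subtype _ hmem]
    refine sum_le_sum fun u _ => ?_
    rw [sum_subtype _ hmem]
    exact sum_le_sum fun v _ => (hℓ.preconnected u v).dist_map_le (Embedding.induce _).toHom
  rw [hsplit, sum_congr rfl fun u _ => hsplit (G.dist u), sum_add_distrib]
  omega

theorem Connected.sum_sum_dist_le (hG : G.Connected) :
    ∑ u, ∑ v, G.dist u v ≤ 2 * (Fintype.card V + 1).choose 3 := by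
  refine Finite.induction_subsingleton_or_nontrivial
    (P := fun V => ∀ [Fintype V] (G : SimpleGraph V), G.Connected →
      ∑ u, ∑ v, G.dist u v ≤ 2 * (Fintype.card V + 1).choose 3) V ?_ ?_ G hG
  · intro V _ _ _ G _
    have h0 (u v : V) : G.dist u v = 0 := by rw [Subsingleton.elim u v, dist_self]
    simp [h0]
  · intro V _ _ ih _ G hG
    classical
    obtain ⟨ℓ, hℓ⟩ := hG.exists_connected_induce_compl_singleton_of_finite_nontrivial
    have hcard : Fintype.card ↥({ℓ}ᶜ : Set V) = Fintype.card V - 1 := Set.card_ne_eq ℓ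
    have hpos := Fintype.card_pos (α := V)
    have hrest := ih ↥({ℓ}ᶜ : Set V) (by simp only [Nat.card_eq_fintype_card]; omega) _ hℓ
    rw [hcard, Nat.sub_add_cancel hpos] at hrest
    have hchoose : (Fintype.card V + 1).choose 3 =
        (Fintype.card V).choose 2 + (Fintype.card V).choose 3 :=
      Nat.choose_succ_succ' _ 2
    have hℓsum := hG.sum_dist_le_choose_two ℓ
    have hdelete := sum_sum_dist_le_induce_compl_singleton hℓ
    omega

theorem Connected.exists_injective_dist_of_sum_sum_dist_eq (hG : G.Connected)
    (h : ∑ u, ∑ v, G.dist u v = 2 * (Fintype.card V + 1).choose 3) :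
    ∃ ℓ, Function.Injective (G.dist ℓ) := by
  classical
  rcases subsingleton_or_nontrivial V with hV | hV
  · obtain ⟨ℓ⟩ := hG.nonempty
    exact ⟨ℓ, Function.injective_of_subsingleton _⟩
  obtain ⟨ℓ, hℓ⟩ := hG.exists_connected_induce_compl_singleton_of_finite_nontrivial
  have hcard : Fintype.card ↥({ℓ}ᶜ : Set V) = Fintype.card V - 1 := Set.card_ne_eq ℓ
  have hrest := hℓ.sum_sum_dist_le
  rw [hcard, Nat.sub_add_cancel Fintype.card_pos] at hrest
  have hchoose : (Fintype.card V + 1).choose 3 =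
      (Fintype.card V).choose 2 + (Fintype.card V).choose 3 :=
    Nat.choose_succ_succ' _ 2
  have hℓsum := hG.sum_dist_le_choose_two ℓ
  have hdelete := sum_sum_dist_le_induce_compl_singleton hℓ
  exact ⟨ℓ, hG.injective_dist_of_sum_dist_eq (by omega)⟩

theorem Connected.nonempty_iso_pathGraph_of_injective_dist (hG : G.Connected) {ℓ : V}
    (hinj : Function.Injective (G.dist ℓ)) : Nonempty (G ≃g pathGraph (Fintype.card V)) := by
  let F : V → Fin (Fintype.card V) := fun v => ⟨G.dist ℓ v, hG.dist_lt_card ℓ v⟩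
  have hF : F.Bijective := (Fintype.bijective_iff_injective_and_card F).mpr
    ⟨fun u v huv => hinj (congrArg Fin.val huv), (Fintype.card_fin _).symm⟩
  refine ⟨⟨Equiv.ofBijective F hF, fun {u v} => ?_⟩⟩
  simp only [Equiv.ofBijective_apply, pathGraph_adj, F]
  constructor
  · rintro (h | h)
    exacts [hG.adj_of_injective_dist hinj h.symm, (hG.adj_of_injective_dist hinj h.symm).symm]
  · intro h
    have hne : G.dist ℓ u ≠ G.dist ℓ v := fun h' => h.ne (hinj h')
    rcases h.diff_dist_adj (u := ℓ) with h' | h' | h' <;> omega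

end Fintype

lemma Walk.dist_le_length_pathGraph {n : ℕ} {i j : Fin n} (p : (pathGraph n).Walk i j) :
    Nat.dist i j ≤ p.length := by
  induction p with
  | nil => simp
  | cons h _ ih =>
    rw [pathGraph_adj] at h
    simp only [Walk.length_cons, Nat.dist] at ih ⊢
    omega

lemma pathGraph_dist_le {n : ℕ} (i : Fin n) :
    ∀ (k : ℕ) (j : Fin n), (j : ℕ) = i + k → (pathGraph n).dist i j ≤ k
  | 0, j, hj => by simp [Fin.ext hj.symm]
  | k + 1, j, hj => by
    let j' : Fin n := ⟨i + k, by omega⟩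
    have hadj : (pathGraph n).Adj j' j := pathGraph_adj.mpr (.inl hj.symm)
    calc (pathGraph n).dist i j ≤ (pathGraph n).dist i j' + (pathGraph n).dist j' j :=
          hadj.reachable.dist_triangle_right i
      _ ≤ k + 1 := by
        rw [dist_eq_one_iff_adj.mpr hadj]
        exact Nat.add_le_add_right (pathGraph_dist_le i k j' rfl) 1

theorem pathGraph_dist {n : ℕ} (i j : Fin n) : (pathGraph n).dist i j = Nat.dist i j := by
  refine le_antisymm ?_ ?_
  · rcases le_total (i : ℕ) j with h | h
    · rw [Nat.dist_eq_sub_of_le h]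
      exact pathGraph_dist_le i _ j (by omega)
    · rw [dist_comm, Nat.dist_eq_sub_of_le_right h]
      exact pathGraph_dist_le j _ i (by omega)
  · obtain ⟨p, hp⟩ := (pathGraph_preconnected n i j).exists_walk_length_eq_dist
    exact hp ▸ p.dist_le_length_pathGraph

theorem sum_sum_dist_pathGraph (n : ℕ) :
    ∑ u : Fin n, ∑ v : Fin n, (pathGraph n).dist u v = 2 * (n + 1).choose 3 := by
  rw [← Nat.sum_range_sum_range_dist n, ← Fin.sum_univ_eq_sum_range]
  simp only [pathGraph_dist, ← Fin.sum_univ_eq_sum_range (Nat.dist _)]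

end SimpleGraph

theorem path_unique_max_wiener_general (n : ℕ)
    (T : SimpleGraph (Fin n)) (hT : T.IsTree) :
    wiener (SimpleGraph.pathGraph n) = (n + 1).choose 3 ∧
    wiener T ≤ wiener (SimpleGraph.pathGraph n) ∧
    (wiener T = wiener (SimpleGraph.pathGraph n) →
      Nonempty (T ≃g SimpleGraph.pathGraph n)) := by
  have hP := SimpleGraph.sum_sum_dist_pathGraph n
  have hT_le : ∑ u, ∑ v, T.dist u v ≤ 2 * (n + 1).choose 3 := by
    simpa using hT.connected.sum_sum_dist_le
  refine ⟨by rw [wiener, hP]; omega, by rw [wiener, wiener, hP]; omega, fun heq => ?_⟩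
  rw [wiener, wiener, hP] at heq
  obtain ⟨ℓ, hℓ⟩ := hT.connected.exists_injective_dist_of_sum_sum_dist_eq
    (by rw [Fintype.card_fin]; omega)
  have hiso := hT.connected.nonempty_iso_pathGraph_of_injective_dist hℓ
  rwa [Fintype.card_fin] at hiso

/-- Among all trees on `n ≥ 2` vertices, the path `P_n` uniquely maximizes
the Wiener index, with value `C(n+1,3) = n(n²-1)/6`. -/
theorem path_unique_max_wiener (n : ℕ) (hn : 2 ≤ n)
    (T : SimpleGraph (Fin n)) (hT : T.IsTree) :
    wiener (SimpleGraph.pathGraph n) = (n + 1).choose 3 ∧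
    wiener T ≤ wiener (SimpleGraph.pathGraph n) ∧
    (wiener T = wiener (SimpleGraph.pathGraph n) →
      Nonempty (T ≃g SimpleGraph.pathGraph n)) :=
  path_unique_max_wiener_general n T hT
end

section
/- Let nonneg integers N, and n_1 ≥ n_2 ≥ ... ≥ n_k ≥ 1 with ∑n_i = N be given. Among all ways to arrange components of sizes n_1,...,n_k at positions p_1 < p_2 < ... < p_k on a line (positions being integers), the sum ∑_{i<j} (p_j − p_i)·n_i·n_j is minimized when the largest components are placed closest to the center, i.e., when the sizes from the center outward alternate in decreasing order. -/
/-- The weighted-distance cost of arranging components of sizes `n ∘ σ` at the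
integer positions `p 0 < p 1 < ... < p (k-1)`:
`∑_{i<j} (p j − p i)·n(σ i)·n(σ j)`. -/
def arrangeCost (k : ℕ) (p : Fin k → ℤ) (n : Fin k → ℕ) (σ : Equiv.Perm (Fin k)) : ℤ :=
  ∑ i : Fin k, ∑ j : Fin k,
    if i < j then (p j - p i) * (n (σ i) : ℤ) * (n (σ j) : ℤ) else 0

namespace ArrangeAux

variable {k : ℕ}

def Pm (n : Fin k → ℕ) (σ : Equiv.Perm (Fin k)) (i : Fin k) : ℤ :=
  ∑ j ∈ Finset.univ.filter (fun j => j < i), (n (σ j) : ℤ)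

def Sm (n : Fin k → ℕ) (σ : Equiv.Perm (Fin k)) (i : Fin k) : ℤ :=
  ∑ j ∈ Finset.univ.filter (fun j => i < j), (n (σ j) : ℤ)

lemma costEq (p : Fin k → ℤ) (n : Fin k → ℕ) (σ : Equiv.Perm (Fin k)) :
    arrangeCost k p n σ = ∑ i, p i * (n (σ i) : ℤ) * (Pm n σ i - Sm n σ i) := by
  have h1 : arrangeCost k p n σ =
      (∑ i : Fin k, ∑ j : Fin k, if i < j then p j * (n (σ i) : ℤ) * (n (σ j) : ℤ) else 0)
      - (∑ i : Fin k, ∑ j : Fin k, if i < j then p i * (n (σ i) : ℤ) * (n (σ j) : ℤ) else 0) := by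
    rw [← Finset.sum_sub_distrib]
    refine Finset.sum_congr rfl fun i _ => ?_
    rw [← Finset.sum_sub_distrib]
    refine Finset.sum_congr rfl fun j _ => ?_
    split_ifs <;> ring
  rw [h1]
  have h2 : (∑ i : Fin k, ∑ j : Fin k, if i < j then p j * (n (σ i) : ℤ) * (n (σ j) : ℤ) else 0)
      = ∑ i, p i * (n (σ i) : ℤ) * Pm n σ i := by
    rw [Finset.sum_comm]
    refine Finset.sum_congr rfl fun j _ => ?_
    rw [Pm, Finset.mul_sum, ← Finset.sum_filter]
    refine Finset.sum_congr rfl fun i hi => ?_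
    ring
  have h3 : (∑ i : Fin k, ∑ j : Fin k, if i < j then p i * (n (σ i) : ℤ) * (n (σ j) : ℤ) else 0)
      = ∑ i, p i * (n (σ i) : ℤ) * Sm n σ i := by
    refine Finset.sum_congr rfl fun i _ => ?_
    rw [Sm, Finset.mul_sum, ← Finset.sum_filter]
  rw [h2, h3, ← Finset.sum_sub_distrib]
  refine Finset.sum_congr rfl fun i _ => ?_
  ring


lemma sum_swap_stable {t t' : Fin k} (A : Finset (Fin k)) (f : Fin k → ℤ)
    (h : ∀ j, j ∈ A ↔ Equiv.swap t t' j ∈ A) :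
    ∑ j ∈ A, f (Equiv.swap t t' j) = ∑ j ∈ A, f j :=
  Finset.sum_equiv (Equiv.swap t t') h (fun _ _ => rfl)

variable (n : Fin k → ℕ)

section Swap

variable (σ : Equiv.Perm (Fin k)) (t t' : Fin k) (ht' : (t' : ℕ) = (t : ℕ) + 1)

include ht'

lemma t_lt_t' : t < t' := by simp [Fin.lt_def, ht']

lemma lt_iff_succ_le (j : Fin k) : t < j ↔ t' ≤ j := by
  rw [Fin.lt_def, Fin.le_def, ht', Nat.succ_le_iff]

lemma filter_gt_eq : Finset.univ.filter (fun j => t < j)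
    = insert t' (Finset.univ.filter (fun j => t' < j)) := by
  ext j
  simp only [Finset.mem_filter, Finset.mem_insert, Finset.mem_univ, true_and]
  constructor
  · intro hj
    rcases eq_or_lt_of_le ((lt_iff_succ_le t t' ht' j).1 hj) with h | h
    · exact Or.inl h.symm
    · exact Or.inr h
  · rintro (h | hj)
    · rw [h]; exact t_lt_t' t t' ht'
    · exact lt_trans (t_lt_t' t t' ht') hj

lemma filter_lt_eq : Finset.univ.filter (fun j => j < t')
    = insert t (Finset.univ.filter (fun j => j < t)) := by
  ext j
  simp only [Finset.mem_filter, Finset.mem_insert, Finset.mem_univ, true_and]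
  constructor
  · intro hj
    have : (j : ℕ) < (t : ℕ) + 1 := by rw [← ht']; exact hj
    rcases eq_or_lt_of_le (Nat.lt_succ_iff.mp this) with h | h
    · exact Or.inl (Fin.ext h)
    · exact Or.inr h
  · rintro (h | hj)
    · rw [h]; exact t_lt_t' t t' ht'
    · exact lt_trans hj (t_lt_t' t t' ht')

lemma Sm_t : Sm n σ t = (n (σ t') : ℤ) + Sm n σ t' := by
  rw [Sm, filter_gt_eq t t' ht', Finset.sum_insert (by simp), Sm]

lemma Pm_t' : Pm n σ t' = (n (σ t) : ℤ) + Pm n σ t := by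
  rw [Pm, filter_lt_eq t t' ht', Finset.sum_insert (by simp), Pm]


lemma mem_iff_swap {A : Finset (Fin k)} (hA : t ∈ A ↔ t' ∈ A) :
    ∀ j, j ∈ A ↔ Equiv.swap t t' j ∈ A := by
  intro j
  rcases eq_or_ne j t with rfl | h1
  · rw [Equiv.swap_apply_left]; exact hA
  rcases eq_or_ne j t' with rfl | h2
  · rw [Equiv.swap_apply_right]; exact hA.symm
  · rw [Equiv.swap_apply_of_ne_of_ne h1 h2]

lemma tlt_iff (x : Fin k) (hx2 : x ≠ t') : (t < x ↔ t' < x) := by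
  constructor
  · intro h
    exact lt_of_le_of_ne ((lt_iff_succ_le t t' ht' x).1 h) (Ne.symm hx2)
  · intro h
    exact lt_trans (t_lt_t' t t' ht') h

lemma ltt_iff (x : Fin k) (hx1 : x ≠ t) : (x < t ↔ x < t') := by
  constructor
  · intro h
    exact lt_trans h (t_lt_t' t t' ht')
  · intro h
    have : (x : ℕ) < (t : ℕ) + 1 := by rw [← ht']; exact h
    exact lt_of_le_of_ne (Fin.le_def.mpr (Nat.lt_succ_iff.mp this)) hx1


lemma Pm_mul_swap (x : Fin k) (hx : x ≠ t') :
    Pm n (σ * Equiv.swap t t') x = Pm n σ x := by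
  simp only [Pm, Equiv.Perm.mul_apply]
  refine sum_swap_stable _ (fun j => (n (σ j) : ℤ)) (mem_iff_swap t t' ht' ?_)
  simp only [Finset.mem_filter, Finset.mem_univ, true_and]
  exact tlt_iff t t' ht' x hx

lemma Sm_mul_swap (x : Fin k) (hx : x ≠ t) :
    Sm n (σ * Equiv.swap t t') x = Sm n σ x := by
  simp only [Sm, Equiv.Perm.mul_apply]
  refine sum_swap_stable _ (fun j => (n (σ j) : ℤ)) (mem_iff_swap t t' ht' ?_)
  simp only [Finset.mem_filter, Finset.mem_univ, true_and]
  exact ltt_iff t t' ht' x hx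

lemma cost_swap (p : Fin k → ℤ) :
    arrangeCost k p n (σ * Equiv.swap t t') = arrangeCost k p n σ
      + (p t' - p t) * ((n (σ t) : ℤ) - (n (σ t') : ℤ)) * (Pm n σ t - Sm n σ t') := by
  have htne : t ≠ t' := ne_of_lt (t_lt_t' t t' ht')
  set σ' := σ * Equiv.swap t t' with hσ'
  have happt : σ' t = σ t' := by rw [hσ', Equiv.Perm.mul_apply, Equiv.swap_apply_left]
  have happt' : σ' t' = σ t := by rw [hσ', Equiv.Perm.mul_apply, Equiv.swap_apply_right]
  have happ : ∀ x, x ≠ t → x ≠ t' → σ' x = σ x := by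
    intro x h1 h2
    rw [hσ', Equiv.Perm.mul_apply, Equiv.swap_apply_of_ne_of_ne h1 h2]
  -- stability of partial sums
  have hPm : ∀ x, x ≠ t' → Pm n σ' x = Pm n σ x := fun x hx => Pm_mul_swap n σ t t' ht' x hx
  have hSm : ∀ x, x ≠ t → Sm n σ' x = Sm n σ x := fun x hx => Sm_mul_swap n σ t t' ht' x hx
  have hPt : Pm n σ' t = Pm n σ t := hPm t htne
  have hSt' : Sm n σ' t' = Sm n σ t' := hSm t' (Ne.symm htne)
  have hSmt : Sm n σ t = (n (σ t') : ℤ) + Sm n σ t' := Sm_t n σ t t' ht'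
  have hSmt' : Sm n σ' t = (n (σ t) : ℤ) + Sm n σ t' := by
    rw [Sm_t n σ' t t' ht', happt', hSt']
  have hPt'σ : Pm n σ t' = (n (σ t) : ℤ) + Pm n σ t := Pm_t' n σ t t' ht'
  have hPt'σ' : Pm n σ' t' = (n (σ t') : ℤ) + Pm n σ t := by
    rw [Pm_t' n σ' t t' ht', happt, hPt]
  rw [costEq p n σ', costEq p n σ]
  have key : (∑ i, p i * (n (σ' i) : ℤ) * (Pm n σ' i - Sm n σ' i))
      - (∑ i, p i * (n (σ i) : ℤ) * (Pm n σ i - Sm n σ i))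
      = (p t' - p t) * ((n (σ t) : ℤ) - (n (σ t') : ℤ)) * (Pm n σ t - Sm n σ t') := by
    rw [← Finset.sum_sub_distrib]
    have hsub : ∑ i : Fin k, (p i * (n (σ' i) : ℤ) * (Pm n σ' i - Sm n σ' i)
        - p i * (n (σ i) : ℤ) * (Pm n σ i - Sm n σ i))
        = ∑ i ∈ ({t, t'} : Finset (Fin k)), (p i * (n (σ' i) : ℤ) * (Pm n σ' i - Sm n σ' i)
        - p i * (n (σ i) : ℤ) * (Pm n σ i - Sm n σ i)) := by
      refine (Finset.sum_subset (Finset.subset_univ _) ?_).symm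
      intro x _ hnot
      simp only [Finset.mem_insert, Finset.mem_singleton, not_or] at hnot
      rw [happ x hnot.1 hnot.2, hPm x hnot.2, hSm x hnot.1, sub_self]
    rw [hsub, Finset.sum_pair htne, happt, happt', hPt, hSmt', hPt'σ', hSt', hSmt, hPt'σ]
    ring
  linarith [key]

end Swap

def DD (σ : Equiv.Perm (Fin k)) (x : ℕ) (hx : x + 1 < k) : ℤ :=
  Pm n σ ⟨x, Nat.lt_of_succ_lt hx⟩ - Sm n σ ⟨x + 1, hx⟩

lemma Pm_le (σ : Equiv.Perm (Fin k)) {t u : Fin k} (htu : t < u) :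
    Pm n σ t + (n (σ t) : ℤ) ≤ Pm n σ u := by
  have hins : insert t (Finset.univ.filter (fun j => j < t))
      ⊆ Finset.univ.filter (fun j => j < u) := by
    intro j hj
    simp only [Finset.mem_insert, Finset.mem_filter, Finset.mem_univ, true_and] at hj ⊢
    rcases hj with rfl | hj
    · exact htu
    · exact lt_trans hj htu
  calc Pm n σ t + (n (σ t) : ℤ)
      = ∑ j ∈ insert t (Finset.univ.filter (fun j => j < t)), (n (σ j) : ℤ) := by
        rw [Finset.sum_insert (by simp), Pm]; ring
    _ ≤ Pm n σ u := Finset.sum_le_sum_of_subset_of_nonneg hins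
        (fun j _ _ => by positivity)

lemma Sm_le (σ : Equiv.Perm (Fin k)) {t u : Fin k} (htu : t ≤ u) :
    Sm n σ u ≤ Sm n σ t := by
  refine Finset.sum_le_sum_of_subset_of_nonneg ?_ (fun j _ _ => by positivity)
  intro j hj
  simp only [Finset.mem_filter, Finset.mem_univ, true_and] at hj ⊢
  exact lt_of_le_of_lt htu hj

lemma DD_mono (hpos : ∀ i, 1 ≤ n i) (σ : Equiv.Perm (Fin k)) {x y : ℕ}
    (hxy : x < y) (hy : y + 1 < k) (hx : x + 1 < k) :
    DD n σ x hx < DD n σ y hy := by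
  have h1 : Pm n σ ⟨x, Nat.lt_of_succ_lt hx⟩ + (n (σ ⟨x, Nat.lt_of_succ_lt hx⟩) : ℤ)
      ≤ Pm n σ ⟨y, Nat.lt_of_succ_lt hy⟩ := Pm_le n σ (by simpa [Fin.lt_def] using hxy)
  have h2 : Sm n σ ⟨y + 1, hy⟩ ≤ Sm n σ ⟨x + 1, hx⟩ :=
    Sm_le n σ (by simp [Fin.le_def]; omega)
  have h3 : (1 : ℤ) ≤ (n (σ ⟨x, Nat.lt_of_succ_lt hx⟩) : ℤ) := by
    exact_mod_cast hpos _
  rw [DD, DD]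
  linarith

lemma min_sign (p : Fin k → ℤ) (hp : StrictMono p) (σ : Equiv.Perm (Fin k))
    (hmin : ∀ π : Equiv.Perm (Fin k), arrangeCost k p n σ ≤ arrangeCost k p n π)
    (x : ℕ) (hx : x + 1 < k) :
    0 ≤ ((n (σ ⟨x, Nat.lt_of_succ_lt hx⟩) : ℤ) - (n (σ ⟨x + 1, hx⟩) : ℤ)) * DD n σ x hx := by
  set t : Fin k := ⟨x, Nat.lt_of_succ_lt hx⟩
  set t' : Fin k := ⟨x + 1, hx⟩
  have ht' : (t' : ℕ) = (t : ℕ) + 1 := rfl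
  have hd : 0 < p t' - p t := by
    have : p t < p t' := hp (t_lt_t' t t' ht')
    linarith
  have hc := cost_swap n σ t t' ht' p
  have h0 := hmin (σ * Equiv.swap t t')
  rw [hc] at h0
  have : 0 ≤ (p t' - p t) * (((n (σ t) : ℤ) - (n (σ t') : ℤ)) * (Pm n σ t - Sm n σ t')) := by
    rw [← mul_assoc]; linarith
  have := (mul_nonneg_iff_of_pos_left hd).mp this
  simpa [DD] using this


def Good (σ : Equiv.Perm (Fin k)) : Prop :=
  ∀ x : ℕ, ∀ hx : x + 1 < k, DD n σ x hx = 0 →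
    n (σ ⟨x + 1, hx⟩) ≤ n (σ ⟨x, Nat.lt_of_succ_lt hx⟩)

lemma unimodal_of_good (hpos : ∀ i, 1 ≤ n i) (hk : 1 ≤ k) (p : Fin k → ℤ)
    (hp : StrictMono p) (σ : Equiv.Perm (Fin k))
    (hmin : ∀ π : Equiv.Perm (Fin k), arrangeCost k p n σ ≤ arrangeCost k p n π)
    (good : Good n σ) :
    ∃ c : Fin k,
      (∀ i j : Fin k, i ≤ j → j ≤ c → n (σ i) ≤ n (σ j)) ∧
      (∀ i j : Fin k, c ≤ i → i ≤ j → n (σ j) ≤ n (σ i)) := by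
  classical
  have adjup : ∀ x, ∀ hx : x + 1 < k, DD n σ x hx < 0 →
      n (σ ⟨x, Nat.lt_of_succ_lt hx⟩) ≤ n (σ ⟨x + 1, hx⟩) := by
    intro x hx hD
    by_contra hcon
    have h1 : (n (σ ⟨x + 1, hx⟩) : ℤ) < (n (σ ⟨x, Nat.lt_of_succ_lt hx⟩) : ℤ) := by
      exact_mod_cast Nat.lt_of_not_le hcon
    have := min_sign n p hp σ hmin x hx
    nlinarith
  have adjdown : ∀ x, ∀ hx : x + 1 < k, 0 ≤ DD n σ x hx →
      n (σ ⟨x + 1, hx⟩) ≤ n (σ ⟨x, Nat.lt_of_succ_lt hx⟩) := by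
    intro x hx hD
    rcases eq_or_lt_of_le hD with hD0 | hDpos
    · exact good x hx hD0.symm
    by_contra hcon
    have h1 : (n (σ ⟨x, Nat.lt_of_succ_lt hx⟩) : ℤ) < (n (σ ⟨x + 1, hx⟩) : ℤ) := by
      exact_mod_cast Nat.lt_of_not_le hcon
    have := min_sign n p hp σ hmin x hx
    nlinarith
  let P : ℕ → Prop := fun x => if hx : x + 1 < k then 0 ≤ DD n σ x hx else True
  have hPdec : DecidablePred P := fun x => Classical.dec _
  have hPk : P (k - 1) := by
    simp only [P]
    rw [dif_neg (by omega)]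
    trivial
  have hex : ∃ x, P x := ⟨k - 1, hPk⟩
  let c0 := Nat.find hex
  have hc0le : c0 ≤ k - 1 := Nat.find_le hPk
  have hc0k : c0 < k := by omega
  have stepA : ∀ x, ∀ hx : x + 1 < k, x + 1 ≤ c0 →
      n (σ ⟨x, Nat.lt_of_succ_lt hx⟩) ≤ n (σ ⟨x + 1, hx⟩) := by
    intro x hx hxc
    have hnP : ¬ P x := Nat.find_min hex (by omega)
    simp only [P] at hnP
    rw [dif_pos hx] at hnP
    exact adjup x hx (lt_of_not_ge hnP)
  have stepB : ∀ x, ∀ hx : x + 1 < k, c0 ≤ x →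
      n (σ ⟨x + 1, hx⟩) ≤ n (σ ⟨x, Nat.lt_of_succ_lt hx⟩) := by
    intro x hx hcx
    refine adjdown x hx ?_
    rcases eq_or_lt_of_le hcx with heq | hlt
    · subst heq
      have := Nat.find_spec hex
      simp only [P] at this
      rwa [dif_pos hx] at this
    · have hc1 : c0 + 1 < k := by omega
      have h1 : 0 ≤ DD n σ c0 hc1 := by
        have := Nat.find_spec hex
        simp only [P] at this
        rwa [dif_pos hc1] at this
      have := DD_mono n hpos σ hlt hx hc1
      linarith
  have chainA : ∀ d : ℕ, ∀ i : Fin k, ∀ h : (i : ℕ) + d < k, (i : ℕ) + d ≤ c0 →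
      n (σ i) ≤ n (σ ⟨(i : ℕ) + d, h⟩) := by
    intro d
    induction d with
    | zero => intro i h hle; exact le_of_eq (by congr 1)
    | succ d ih =>
      intro i h hle
      have h' : (i : ℕ) + d < k := by omega
      have h1 := ih i h' (by omega)
      have h2 := stepA ((i : ℕ) + d) (by omega) (by omega)
      exact le_trans h1 h2
  have chainB : ∀ d : ℕ, ∀ i : Fin k, c0 ≤ (i : ℕ) → ∀ h : (i : ℕ) + d < k,
      n (σ ⟨(i : ℕ) + d, h⟩) ≤ n (σ i) := by
    intro d
    induction d with
    | zero => intro i hci h; exact le_of_eq (by congr 1)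
    | succ d ih =>
      intro i hci h
      have h' : (i : ℕ) + d < k := by omega
      have h1 := ih i hci h'
      have h2 := stepB ((i : ℕ) + d) (by omega) (by omega)
      exact le_trans h2 h1
  refine ⟨⟨c0, hc0k⟩, ?_, ?_⟩
  · intro i j hij hjc
    have hjc' : (j : ℕ) ≤ c0 := hjc
    have := chainA ((j : ℕ) - (i : ℕ)) i (by omega) (by omega)
    have hj : (⟨(i : ℕ) + ((j : ℕ) - (i : ℕ)), by omega⟩ : Fin k) = j := Fin.ext (by
      simp only []
      omega)
    rwa [hj] at this
  · intro i j hci hij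
    have hci' : c0 ≤ (i : ℕ) := hci
    have := chainB ((j : ℕ) - (i : ℕ)) i hci' (by omega)
    have hj : (⟨(i : ℕ) + ((j : ℕ) - (i : ℕ)), by omega⟩ : Fin k) = j := Fin.ext (by
      simp only []
      omega)
    rwa [hj] at this


end ArrangeAux


open ArrangeAux

/-- Given sizes `n 0 ≥ n 1 ≥ ... ≥ n (k-1) ≥ 1` with total `N`, and fixed
integer positions `p 0 < p 1 < ... < p (k-1)` on a line, the pairwise cost
`∑_{i<j} (p j − p i)·n_i·n_j` is minimized by an arrangement that places the largest
components closest to the center: there is a cost-minimizing permutation `σ` whose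
size sequence is unimodal (weakly increasing up to some position `m` and weakly
decreasing afterwards, i.e. sizes decrease outward from the center). -/
theorem arrange_min_unimodal (N k : ℕ) (hk : 1 ≤ k) (n : Fin k → ℕ) (p : Fin k → ℤ)
    (hsum : ∑ i, n i = N)
    (hpos : ∀ i, 1 ≤ n i)
    (hdec : ∀ i j : Fin k, i ≤ j → n j ≤ n i)
    (hp : StrictMono p) :
    ∃ σ : Equiv.Perm (Fin k),
      (∀ π : Equiv.Perm (Fin k), arrangeCost k p n σ ≤ arrangeCost k p n π) ∧
      ∃ c : Fin k,
        (∀ i j : Fin k, i ≤ j → j ≤ c → n (σ i) ≤ n (σ j)) ∧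
        (∀ i j : Fin k, c ≤ i → i ≤ j → n (σ j) ≤ n (σ i)) := by
  classical
  obtain ⟨σ0, -, hσ0⟩ := Finset.exists_min_image (Finset.univ : Finset (Equiv.Perm (Fin k)))
    (arrangeCost k p n) ⟨1, Finset.mem_univ 1⟩
  have hmin0 : ∀ π : Equiv.Perm (Fin k), arrangeCost k p n σ0 ≤ arrangeCost k p n π :=
    fun π => hσ0 π (Finset.mem_univ π)
  by_cases hg : Good n σ0
  · exact ⟨σ0, hmin0, unimodal_of_good n hpos hk p hp σ0 hmin0 hg⟩
  · simp only [Good, not_forall] at hg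
    obtain ⟨x, hx, hDD0, hbad⟩ := hg
    have hlt : n (σ0 ⟨x, Nat.lt_of_succ_lt hx⟩) < n (σ0 ⟨x + 1, hx⟩) := Nat.lt_of_not_le hbad
    set t : Fin k := ⟨x, Nat.lt_of_succ_lt hx⟩ with htdef
    set t' : Fin k := ⟨x + 1, hx⟩ with ht'def
    have ht' : (t' : ℕ) = (t : ℕ) + 1 := rfl
    have htne : t ≠ t' := ne_of_lt (t_lt_t' t t' ht')
    set σ1 := σ0 * Equiv.swap t t' with hσ1
    have hDD0' : Pm n σ0 t - Sm n σ0 t' = 0 := hDD0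
    have hceq : arrangeCost k p n σ1 = arrangeCost k p n σ0 := by
      rw [hσ1, cost_swap n σ0 t t' ht' p, hDD0']
      ring
    have hmin1 : ∀ π : Equiv.Perm (Fin k), arrangeCost k p n σ1 ≤ arrangeCost k p n π :=
      fun π => hceq ▸ hmin0 π
    have happt : σ1 t = σ0 t' := by rw [hσ1, Equiv.Perm.mul_apply, Equiv.swap_apply_left]
    have happt' : σ1 t' = σ0 t := by rw [hσ1, Equiv.Perm.mul_apply, Equiv.swap_apply_right]
    have hDx1 : DD n σ1 x hx = 0 := by
      rw [DD, hσ1, Pm_mul_swap n σ0 t t' ht' t htne,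
        Sm_mul_swap n σ0 t t' ht' t' (Ne.symm htne)]
      exact hDD0'
    have good1 : Good n σ1 := by
      intro y hy hDDy
      have hyx : y = x := by
        by_contra hne
        rcases Nat.lt_or_ge y x with h | h
        · have := DD_mono n hpos σ1 h hx hy
          rw [hDDy, hDx1] at this
          exact lt_irrefl 0 this
        · have hxy : x < y := by omega
          have := DD_mono n hpos σ1 hxy hy hx
          rw [hDDy, hDx1] at this
          exact lt_irrefl 0 this
      subst hyx
      have e1 : (⟨y + 1, hy⟩ : Fin k) = t' := rfl
      have e2 : (⟨y, Nat.lt_of_succ_lt hy⟩ : Fin k) = t := rfl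
      rw [e1, e2, happt, happt']
      exact le_of_lt hlt
    exact ⟨σ1, hmin1, unimodal_of_good n hpos hk p hp σ1 hmin1 good1⟩
end

section
/- Let T be a tree and let v be a vertex on a path such that, with components labeled U_1, W_1, U_2, W_2, ... outward from v along the path, both the component sizes and the degrees of the path vertices are weakly decreasing outward (|V(U_1)| ≥ |V(W_1)| ≥ |V(U_2)| ≥ ... and d(u_1) ≥ d(w_1) ≥ d(u_2) ≥ ...). Then among vertices on the path, the function g_T attains its minimum at u_1. -/
/-- Total distance `g_T(v) = ∑_{x ∈ V(T)} d_T(v,x)`. -/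
noncomputable def totalDist {V : Type*} [Fintype V] (G : SimpleGraph V) (v : V) : ℕ :=
  ∑ u : V, G.dist v u

/-- The degree of a vertex, as the cardinality of its neighbor set. -/
noncomputable def deg {V : Type*} (G : SimpleGraph V) (v : V) : ℕ :=
  (G.neighborSet v).ncard

/-!
Across an edge `ab` of a tree, every vertex on `a`'s side is one step closer to `a` than to `b`
and every vertex on `b`'s side one step closer to `b`, so `g(a) + |side of a| = g(b) + |side of b|`.
Along the path `u_m … u_1 w_1 … w_m` the side of a path edge is the union of the components
`U_i`, `W_i` of the path vertices on that side. Pairing each component beyond the edge with a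
larger one nearer to `u_1` (`W_i ↦ U_i`, resp. `U_{i+1} ↦ W_i`) shows, by the interlacing, that
the side containing `u_1` is the larger one, so `g` does not decrease as one walks away from `u_1`.
-/

open SimpleGraph Finset

namespace SimpleGraph

variable {V : Type*} {G : SimpleGraph V}

theorem dist_eq_dist_add_one_of_not_reachable_deleteEdges {a b x : V} (hab : G.Adj a b)
    (hbx : G.Reachable b x) (hsep : ¬ (G.deleteEdges {s(a, b)}).Reachable b x) :
    G.dist b x = G.dist a x + 1 := by
  classical
  obtain ⟨q, hq⟩ := hbx.exists_walk_length_eq_dist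
  have ha : a ∈ q.support :=
    q.fst_mem_support_of_mem_edges (q.mem_edges_of_not_reachable_deleteEdges hsep)
  have hlt : G.dist a x < G.dist b x :=
    hq ▸ (dist_le _).trans_lt (Walk.length_dropUntil_lt_length ha hab.ne)
  have := hab.diff_dist_adj (u := x)
  rw [dist_comm (u := x), dist_comm (u := x)] at this
  omega

theorem IsTree.not_reachable_deleteEdges (hG : G.IsTree) {a b : V} (hab : G.Adj a b) :
    ¬ (G.deleteEdges {s(a, b)}).Reachable a b :=
  isBridge_iff.mp (isAcyclic_iff_forall_adj_isBridge.mp hG.isAcyclic hab)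

theorem IsTree.totalDist_add_card_eq [Fintype V] [DecidableEq V] (hG : G.IsTree) {a b : V}
    (hab : G.Adj a b) (A : Finset V)
    (hA : ∀ x, x ∈ A ↔ (G.deleteEdges {s(a, b)}).Reachable a x) :
    totalDist G a + #A = totalDist G b + #Aᶜ := by
  have hbridge := hG.not_reachable_deleteEdges hab
  have hpoint : ∀ x, G.dist a x + (if x ∈ A then 1 else 0) =
      G.dist b x + (if x ∈ Aᶜ then 1 else 0) := by
    intro x
    by_cases hx : x ∈ A
    · have := dist_eq_dist_add_one_of_not_reachable_deleteEdges hab (hG.connected b x)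
        fun hbx => hbridge (((hA x).mp hx).trans hbx.symm)
      simp [hx, this]
    · have := dist_eq_dist_add_one_of_not_reachable_deleteEdges hab.symm (hG.connected a x)
        (by rwa [Sym2.eq_swap, ← hA])
      simp [hx, this]
  have hsum := sum_congr rfl fun x (_ : x ∈ univ) => hpoint x
  rw [sum_add_distrib, sum_add_distrib, sum_boole, sum_boole] at hsum
  simpa only [totalDist, filter_mem_eq_inter, univ_inter, Nat.cast_id] using hsum

theorem reachable_of_adj_succ {c : ℕ → V} {a b : ℕ} (hab : a ≤ b)
    (hadj : ∀ j, a ≤ j → j < b → G.Adj (c j) (c (j + 1))) : G.Reachable (c a) (c b) := by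
  induction b, hab using Nat.le_induction with
  | base => rfl
  | succ b hab ih =>
    exact (ih fun j hj hjb => hadj j hj (by omega)).trans (hadj b hab b.lt_succ_self).reachable

theorem card_eq_sum_ncard_supp [Fintype V] [DecidableEq V] {ι : Type*} (I : Finset ι)
    (v : ι → V)
    (hv : ∀ i ∈ I, ∀ j ∈ I, G.Reachable (v i) (v j) → i = j)
    (A : Finset V) (hA : ∀ x, x ∈ A ↔ ∃ i ∈ I, G.Reachable (v i) x) :
    #A = ∑ i ∈ I, (G.connectedComponentMk (v i)).supp.ncard := by
  classical
  have hA' : A = I.biUnion fun i => (G.connectedComponentMk (v i)).supp.toFinset := by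
    ext x
    simp [hA, reachable_comm]
  rw [hA', card_biUnion]
  · simp only [Set.ncard_eq_toFinset_card']
  · intro i hi j hj hij
    refine Set.disjoint_toFinset.mpr (Set.disjoint_left.mpr fun x hxi hxj => hij (hv i hi j hj ?_))
    rw [ConnectedComponent.mem_supp_iff, ConnectedComponent.eq] at hxi hxj
    exact hxi.symm.trans hxj

def pathEdges (c : ℕ → V) (n : ℕ) : Set (Sym2 V) :=
  {e | ∃ k, k + 1 < n ∧ e = s(c k, c (k + 1))}

section PathInTree

variable {c : ℕ → V} {n : ℕ}

theorem eq_of_pathEdge_eq (hinj : Set.InjOn c (Set.Iio n)) {j t : ℕ} (hj : j + 1 < n)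
    (ht : t + 1 < n) (h : s(c j, c (j + 1)) = s(c t, c (t + 1))) : j = t := by
  have hinj' : ∀ a b, a < n → b < n → c a = c b → a = b := fun a b ha hb => @hinj a ha b hb
  rcases Sym2.eq_iff.mp h with ⟨h1, -⟩ | ⟨h1, h2⟩
  · exact hinj' j t (by omega) (by omega) h1
  · have := hinj' j (t + 1) (by omega) (by omega) h1
    have := hinj' (j + 1) t (by omega) (by omega) h2
    omega

theorem reachable_deleteEdges_pathEdge (hadj : ∀ k, k + 1 < n → G.Adj (c k) (c (k + 1)))
    (hinj : Set.InjOn c (Set.Iio n)) {t a b : ℕ} (ht : t + 1 < n) (hab : a ≤ b) (hb : b < n)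
    (hside : b ≤ t ∨ t < a) : (G.deleteEdges {s(c t, c (t + 1))}).Reachable (c a) (c b) :=
  reachable_of_adj_succ hab fun j hj hjb => deleteEdges_adj.mpr
    ⟨hadj j (by omega), fun h => by have := eq_of_pathEdge_eq hinj (by omega) ht h; omega⟩

theorem deleteEdges_pathEdges_le {t : ℕ} (ht : t + 1 < n) :
    G.deleteEdges (pathEdges c n) ≤ G.deleteEdges {s(c t, c (t + 1))} :=
  deleteEdges_anti (Set.singleton_subset_iff.mpr ⟨t, ht, rfl⟩)

theorem IsTree.eq_of_reachable_deleteEdges_pathEdges (hG : G.IsTree)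
    (hadj : ∀ k, k + 1 < n → G.Adj (c k) (c (k + 1))) (hinj : Set.InjOn c (Set.Iio n))
    {k k' : ℕ} (hk : k < n) (hk' : k' < n)
    (hreach : (G.deleteEdges (pathEdges c n)).Reachable (c k) (c k')) : k = k' := by
  wlog hlt : k < k' generalizing k k'
  · rcases (not_lt.mp hlt).eq_or_lt with h | h
    · exact h.symm
    · exact (this hk' hk hreach.symm h).symm
  have ht : k + 1 < n := by omega
  refine absurd ?_ (hG.not_reachable_deleteEdges (hadj k ht))
  exact (hreach.mono (deleteEdges_pathEdges_le ht)).trans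
    (reachable_deleteEdges_pathEdge hadj hinj ht hlt hk' (.inr k.lt_succ_self)).symm

theorem Preconnected.exists_reachable_deleteEdges_pathEdges (hG : G.Preconnected) (hn : 0 < n)
    (x : V) : ∃ k < n, (G.deleteEdges (pathEdges c n)).Reachable (c k) x := by
  have hx := (reachable_iff_reflTransGen _ _).mp (hG (c 0) x)
  induction hx with
  | refl => exact ⟨0, hn, .rfl⟩
  | @tail y z _ hyz ih =>
    obtain ⟨k, hk, hky⟩ := ih
    by_cases he : s(y, z) ∈ pathEdges c n
    · obtain ⟨j, hj, he⟩ := he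
      rcases Sym2.eq_iff.mp he with ⟨-, rfl⟩ | ⟨-, rfl⟩
      exacts [⟨j + 1, hj, .rfl⟩, ⟨j, by omega, .rfl⟩]
    · exact ⟨k, hk, hky.trans (deleteEdges_adj.mpr ⟨hyz, he⟩).reachable⟩

theorem IsTree.reachable_deleteEdges_pathEdge_iff (hG : G.IsTree)
    (hadj : ∀ k, k + 1 < n → G.Adj (c k) (c (k + 1))) (hinj : Set.InjOn c (Set.Iio n))
    {t : ℕ} (ht : t + 1 < n) (x : V) :
    (G.deleteEdges {s(c t, c (t + 1))}).Reachable (c t) x ↔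
      ∃ k ∈ range (t + 1), (G.deleteEdges (pathEdges c n)).Reachable (c k) x := by
  simp only [mem_range, Nat.lt_succ_iff]
  constructor
  · intro htx
    obtain ⟨k, hk, hkx⟩ := hG.connected.preconnected.exists_reachable_deleteEdges_pathEdges
      (c := c) (n := n) (by omega) x
    refine ⟨k, not_lt.mp fun htk => hG.not_reachable_deleteEdges (hadj t ht) ?_, hkx⟩
    have hsk := reachable_deleteEdges_pathEdge hadj hinj ht htk hk (.inr t.lt_succ_self)
    exact htx.trans (hsk.trans (hkx.mono (deleteEdges_pathEdges_le ht))).symm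
  · rintro ⟨k, hkt, hkx⟩
    exact (reachable_deleteEdges_pathEdge hadj hinj ht hkt (by omega) (.inl le_rfl)).symm.trans
      (hkx.mono (deleteEdges_pathEdges_le ht))

theorem IsTree.not_reachable_deleteEdges_pathEdge_iff (hG : G.IsTree)
    (hadj : ∀ k, k + 1 < n → G.Adj (c k) (c (k + 1))) (hinj : Set.InjOn c (Set.Iio n))
    {t : ℕ} (ht : t + 1 < n) (x : V) :
    ¬ (G.deleteEdges {s(c t, c (t + 1))}).Reachable (c t) x ↔
      ∃ k ∈ Ico (t + 1) n, (G.deleteEdges (pathEdges c n)).Reachable (c k) x := by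
  rw [hG.reachable_deleteEdges_pathEdge_iff hadj hinj ht]
  simp only [mem_range, mem_Ico, not_exists, not_and]
  constructor
  · intro h
    obtain ⟨k, hk, hkx⟩ := hG.connected.preconnected.exists_reachable_deleteEdges_pathEdges
      (c := c) (n := n) (by omega) x
    exact ⟨k, ⟨not_lt.mp fun hkt => h k hkt hkx, hk⟩, hkx⟩
  · rintro ⟨k, ⟨htk, hk⟩, hkx⟩ j hjt hjx
    have := hG.eq_of_reachable_deleteEdges_pathEdges hadj hinj (by omega) hk (hjx.trans hkx.symm)
    omega

theorem IsTree.totalDist_add_sum_eq [Fintype V] (hG : G.IsTree)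
    (hadj : ∀ k, k + 1 < n → G.Adj (c k) (c (k + 1))) (hinj : Set.InjOn c (Set.Iio n))
    {t : ℕ} (ht : t + 1 < n) :
    totalDist G (c t) + ∑ k ∈ range (t + 1),
        ((G.deleteEdges (pathEdges c n)).connectedComponentMk (c k)).supp.ncard =
      totalDist G (c (t + 1)) + ∑ k ∈ Ico (t + 1) n,
        ((G.deleteEdges (pathEdges c n)).connectedComponentMk (c k)).supp.ncard := by
  classical
  have hsep : ∀ I : Finset ℕ, (∀ k ∈ I, k < n) → ∀ k ∈ I, ∀ k' ∈ I,
      (G.deleteEdges (pathEdges c n)).Reachable (c k) (c k') → k = k' := fun I hI k hk k' hk' =>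
    hG.eq_of_reachable_deleteEdges_pathEdges hadj hinj (hI k hk) (hI k' hk')
  set A := univ.filter ((G.deleteEdges {s(c t, c (t + 1))}).Reachable (c t))
  have hA : ∀ x, x ∈ A ↔ (G.deleteEdges {s(c t, c (t + 1))}).Reachable (c t) x := by simp [A]
  have hAc : ∀ x, x ∈ Aᶜ ↔ ¬ (G.deleteEdges {s(c t, c (t + 1))}).Reachable (c t) x := by
    simp [A]
  rw [← card_eq_sum_ncard_supp _ c (hsep _ fun k hk => by rw [mem_range] at hk; omega) A
      fun x => (hA x).trans (hG.reachable_deleteEdges_pathEdge_iff hadj hinj ht x),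
    ← card_eq_sum_ncard_supp _ c (hsep _ fun k hk => (mem_Ico.mp hk).2) Aᶜ
      fun x => (hAc x).trans (hG.not_reachable_deleteEdges_pathEdge_iff hadj hinj ht x)]
  exact hG.totalDist_add_card_eq (hadj t ht) A hA

end PathInTree

/-- The path `u m, …, u 1, w 1, …, w m`, indexed from `0` to `2 * m - 1`. -/
def concatPath (u w : ℕ → V) (m k : ℕ) : V :=
  if k < m then u (m - k) else w (k + 1 - m)

section ConcatPath

variable {u w : ℕ → V} {m : ℕ}

theorem concatPath_of_lt {k : ℕ} (hk : k < m) : concatPath u w m k = u (m - k) :=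
  if_pos hk

theorem concatPath_of_le {k : ℕ} (hk : m ≤ k) : concatPath u w m k = w (k + 1 - m) :=
  if_neg hk.not_gt

theorem concatPath_sub {i : ℕ} (hi : 1 ≤ i) (him : i ≤ m) :
    concatPath u w m (m - i) = u i := by
  rw [concatPath_of_lt (by omega), Nat.sub_sub_self him]

theorem concatPath_add {i : ℕ} (hi : 1 ≤ i) (him : i ≤ m) :
    concatPath u w m (m - 1 + i) = w i := by
  rw [concatPath_of_le (by omega)]
  congr 1
  omega

theorem concatPath_injOn
    (hdistinct : ∀ i j, 1 ≤ i → i ≤ m → 1 ≤ j → j ≤ m →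
      ((u i = u j ∨ w i = w j) → i = j) ∧ u i ≠ w j) :
    Set.InjOn (concatPath u w m) (Set.Iio (2 * m)) := by
  intro k hk k' hk' h
  simp only [Set.mem_Iio] at hk hk'
  unfold concatPath at h
  split_ifs at h with h1 h2 h2
  · have := (hdistinct _ _ (by omega) (by omega) (by omega) (by omega)).1 (.inl h); omega
  · exact absurd h ((hdistinct _ _ (by omega) (by omega) (by omega) (by omega)).2)
  · exact absurd h.symm ((hdistinct _ _ (by omega) (by omega) (by omega) (by omega)).2)
  · have := (hdistinct _ _ (by omega) (by omega) (by omega) (by omega)).1 (.inr h); omega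

theorem concatPath_edge_cases {k : ℕ} (hk : k + 1 < 2 * m) :
    (∃ i, 1 ≤ i ∧ i + 1 ≤ m ∧
        s(concatPath u w m k, concatPath u w m (k + 1)) = s(u i, u (i + 1))) ∨
      s(concatPath u w m k, concatPath u w m (k + 1)) = s(u 1, w 1) ∨
      ∃ i, 1 ≤ i ∧ i + 1 ≤ m ∧
        s(concatPath u w m k, concatPath u w m (k + 1)) = s(w i, w (i + 1)) := by
  rcases lt_trichotomy (k + 1) m with h | h | h
  · refine .inl ⟨m - (k + 1), by omega, by omega, ?_⟩
    rw [concatPath_of_lt (k := k) (by omega), concatPath_of_lt h, Sym2.eq_swap,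
      show m - k = m - (k + 1) + 1 by omega]
  · refine .inr (.inl ?_)
    rw [concatPath_of_lt (k := k) (by omega), concatPath_of_le h.ge, show m - k = 1 by omega,
      show k + 1 + 1 - m = 1 by omega]
  · refine .inr (.inr ⟨k + 1 - m, by omega, by omega, ?_⟩)
    rw [concatPath_of_le (k := k) (by omega), concatPath_of_le (k := k + 1) (by omega),
      show k + 1 + 1 - m = k + 1 - m + 1 by omega]

theorem concatPath_adj (huadj : ∀ i, 1 ≤ i → i + 1 ≤ m → G.Adj (u i) (u (i + 1)))
    (hwadj : ∀ i, 1 ≤ i → i + 1 ≤ m → G.Adj (w i) (w (i + 1)))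
    (hcenter : G.Adj (u 1) (w 1)) {k : ℕ} (hk : k + 1 < 2 * m) :
    G.Adj (concatPath u w m k) (concatPath u w m (k + 1)) := by
  rw [← mem_edgeSet]
  rcases concatPath_edge_cases hk with ⟨i, hi, him, he⟩ | he | ⟨i, hi, him, he⟩ <;> rw [he]
  exacts [huadj i hi him, hcenter, hwadj i hi him]

theorem pathEdges_concatPath (hm : 1 ≤ m) :
    pathEdges (concatPath u w m) (2 * m) = {e : Sym2 V | (∃ i, 1 ≤ i ∧ i + 1 ≤ m ∧
      (e = s(u i, u (i + 1)) ∨ e = s(w i, w (i + 1)))) ∨ e = s(u 1, w 1)} := by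
  ext e
  constructor
  · rintro ⟨k, hk, rfl⟩
    rcases concatPath_edge_cases hk with ⟨i, hi, him, he⟩ | he | ⟨i, hi, him, he⟩
    exacts [.inl ⟨i, hi, him, .inl he⟩, .inr he, .inl ⟨i, hi, him, .inr he⟩]
  · rintro (⟨i, hi, him, rfl | rfl⟩ | rfl)
    · refine ⟨m - (i + 1), by omega, ?_⟩
      rw [concatPath_sub (by omega) (by omega), show m - (i + 1) + 1 = m - i by omega,
        concatPath_sub hi (by omega), Sym2.eq_swap]
    · refine ⟨m - 1 + i, by omega, ?_⟩
      rw [concatPath_add hi (by omega), show m - 1 + i + 1 = m - 1 + (i + 1) by omega,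
        concatPath_add (by omega) him]
    · refine ⟨m - 1, by omega, ?_⟩
      rw [concatPath_sub le_rfl hm, concatPath_of_le (by omega),
        show m - 1 + 1 + 1 - m = 1 by omega]

end ConcatPath

end SimpleGraph

theorem Finset.sum_le_sum_of_injOn {ι M : Type*} [AddCommMonoid M] [PartialOrder M]
    [IsOrderedAddMonoid M] [CanonicallyOrderedAdd M] [DecidableEq ι] {s t : Finset ι}
    {f : ι → M} (e : ι → ι) (he : Set.InjOn e s) (hst : ∀ i ∈ s, e i ∈ t)
    (hf : ∀ i ∈ s, f i ≤ f (e i)) : ∑ i ∈ s, f i ≤ ∑ i ∈ t, f i :=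
  calc ∑ i ∈ s, f i ≤ ∑ i ∈ s, f (e i) := sum_le_sum hf
    _ = ∑ i ∈ s.image e, f i := (sum_image he).symm
    _ ≤ ∑ i ∈ t, f i := sum_le_sum_of_subset (image_subset_iff.mpr hst)

section Interlacing

variable {s : ℕ → ℕ} {m : ℕ}

theorem sum_Ico_le_sum_range_of_interlace
    (hR : ∀ i, 1 ≤ i → i ≤ m → s (m - 1 + i) ≤ s (m - i)) {t : ℕ} (ht : m - 1 ≤ t) :
    ∑ k ∈ Ico (t + 1) (2 * m), s k ≤ ∑ k ∈ range (t + 1), s k := by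
  refine sum_le_sum_of_injOn (fun k => 2 * m - 1 - k) ?_ ?_ ?_
  · intro k hk k' hk' h
    simp only [coe_Ico, Set.mem_Ico] at hk hk' h
    omega
  · intro k hk
    simp only [mem_Ico, mem_range] at hk ⊢
    omega
  · intro k hk
    simp only [mem_Ico] at hk
    have := hR (k + 1 - m) (by omega) (by omega)
    rwa [show m - 1 + (k + 1 - m) = k by omega, show m - (k + 1 - m) = 2 * m - 1 - k by omega]
      at this

theorem sum_range_le_sum_Ico_of_interlace
    (hL : ∀ i, 1 ≤ i → i + 1 ≤ m → s (m - (i + 1)) ≤ s (m - 1 + i)) {t : ℕ}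
    (ht : t + 2 ≤ m) :
    ∑ k ∈ range (t + 1), s k ≤ ∑ k ∈ Ico (t + 1) (2 * m), s k := by
  refine sum_le_sum_of_injOn (fun k => 2 * m - 2 - k) ?_ ?_ ?_
  · intro k hk k' hk' h
    simp only [coe_range, Set.mem_Iio] at hk hk' h
    omega
  · intro k hk
    simp only [mem_Ico, mem_range] at hk ⊢
    omega
  · intro k hk
    simp only [mem_range] at hk
    have := hL (m - 1 - k) (by omega) (by omega)
    rwa [show m - (m - 1 - k + 1) = k by omega, show m - 1 + (m - 1 - k) = 2 * m - 2 - k by omega]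
      at this

theorem le_of_sum_balance_of_interlace {g : ℕ → ℕ}
    (hstep : ∀ t, t + 1 < 2 * m →
      g t + ∑ k ∈ range (t + 1), s k = g (t + 1) + ∑ k ∈ Ico (t + 1) (2 * m), s k)
    (hR : ∀ i, 1 ≤ i → i ≤ m → s (m - 1 + i) ≤ s (m - i))
    (hL : ∀ i, 1 ≤ i → i + 1 ≤ m → s (m - (i + 1)) ≤ s (m - 1 + i))
    {k : ℕ} (hk : k < 2 * m) : g (m - 1) ≤ g k := by
  have hmono : MonotoneOn g (Set.Ico (m - 1) (2 * m)) :=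
    monotoneOn_of_le_add_one Set.ordConnected_Ico fun t _ ht ht' => by
      have := hstep t ht'.2
      have := sum_Ico_le_sum_range_of_interlace hR ht.1
      omega
  have hanti : AntitoneOn g (Set.Iic (m - 1)) :=
    antitoneOn_of_add_one_le Set.ordConnected_Iic fun t _ _ ht' => by
      rw [Set.mem_Iic] at ht'
      have := hstep t (by omega)
      have := sum_range_le_sum_Ico_of_interlace hL (t := t) (by omega)
      omega
  rcases le_total (m - 1) k with h | h
  · exact hmono ⟨le_rfl, by omega⟩ ⟨h, hk⟩ h
  · exact hanti h (Set.mem_Iic.mpr le_rfl) h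

end Interlacing

theorem totalDist_min_at_u1_general {V : Type*} [Fintype V]
    (G : SimpleGraph V) (hG : G.IsTree) (m : ℕ) (u w : ℕ → V)
    (huadj : ∀ i, 1 ≤ i → i + 1 ≤ m → G.Adj (u i) (u (i + 1)))
    (hwadj : ∀ i, 1 ≤ i → i + 1 ≤ m → G.Adj (w i) (w (i + 1)))
    (hcenter : G.Adj (u 1) (w 1))
    (hdistinct : ∀ i j, 1 ≤ i → i ≤ m → 1 ≤ j → j ≤ m →
      ((u i = u j ∨ w i = w j) → i = j) ∧ u i ≠ w j)
    -- the graph with the path edges removed, and the component sizes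
    (H : SimpleGraph V)
    (hH : H = G.deleteEdges
      {e : Sym2 V | (∃ i, 1 ≤ i ∧ i + 1 ≤ m ∧
          (e = s(u i, u (i + 1)) ∨ e = s(w i, w (i + 1)))) ∨ e = s(u 1, w 1)})
    (nU nW : ℕ → ℕ)
    (hnU : ∀ i, nU i = (H.connectedComponentMk (u i)).supp.ncard)
    (hnW : ∀ i, nW i = (H.connectedComponentMk (w i)).supp.ncard)
    -- sizes interlace weakly decreasingly outward from `u 1`
    (hsizes : ∀ i, 1 ≤ i → i ≤ m →
      nW i ≤ nU i ∧ (i + 1 ≤ m → nU (i + 1) ≤ nW i)) :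
    ∀ i, 1 ≤ i → i ≤ m →
      totalDist G (u 1) ≤ totalDist G (u i) ∧
      totalDist G (u 1) ≤ totalDist G (w i) := by
  intro i hi him
  have hm : 1 ≤ m := hi.trans him
  set c := concatPath u w m
  have hadj : ∀ k, k + 1 < 2 * m → G.Adj (c k) (c (k + 1)) := fun k hk =>
    concatPath_adj huadj hwadj hcenter hk
  have hH' : H = G.deleteEdges (pathEdges c (2 * m)) := by rw [hH, pathEdges_concatPath hm]
  have hmin : ∀ {k}, k < 2 * m → totalDist G (c (m - 1)) ≤ totalDist G (c k) :=
    le_of_sum_balance_of_interlace (s := fun k => (H.connectedComponentMk (c k)).supp.ncard)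
      (fun t ht => hH' ▸ hG.totalDist_add_sum_eq hadj (concatPath_injOn hdistinct) ht)
      (fun j hj hjm => by
        simp only [c, concatPath_add hj hjm, concatPath_sub hj hjm, ← hnU, ← hnW]
        exact (hsizes j hj hjm).1)
      (fun j hj hjm => by
        simp only [c, concatPath_add (m := m) hj (by omega),
          concatPath_sub (m := m) (i := j + 1) (by omega) hjm, ← hnU, ← hnW]
        exact (hsizes j hj (by omega)).2 hjm)
  rw [← concatPath_sub (u := u) (w := w) le_rfl hm, ← concatPath_sub (u := u) (w := w) hi him,
    ← concatPath_add (u := u) (w := w) hi him]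
  exact ⟨hmin (by omega), hmin (by omega)⟩

/-- Let `T` be a tree with a path `u_m ... u_1 w_1 ... w_m` such that the
component sizes (of `T` minus the path edges) and the degrees of the path vertices
interlace weakly decreasingly outward from `u_1`:
`|U_1| ≥ |W_1| ≥ |U_2| ≥ |W_2| ≥ ...` and `d(u_1) ≥ d(w_1) ≥ d(u_2) ≥ ...`.
Then among the vertices of the path, `g_T` attains its minimum at `u_1`. -/
theorem totalDist_min_at_u1 {V : Type*} [Fintype V]
    (G : SimpleGraph V) (hG : G.IsTree) (m : ℕ) (hm : 1 ≤ m) (u w : ℕ → V)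
    (huadj : ∀ i, 1 ≤ i → i + 1 ≤ m → G.Adj (u i) (u (i + 1)))
    (hwadj : ∀ i, 1 ≤ i → i + 1 ≤ m → G.Adj (w i) (w (i + 1)))
    (hcenter : G.Adj (u 1) (w 1))
    (hdistinct : ∀ i j, 1 ≤ i → i ≤ m → 1 ≤ j → j ≤ m →
      ((u i = u j ∨ w i = w j) → i = j) ∧ u i ≠ w j)
    -- the graph with the path edges removed, and the component sizes
    (H : SimpleGraph V)
    (hH : H = G.deleteEdges
      {e : Sym2 V | (∃ i, 1 ≤ i ∧ i + 1 ≤ m ∧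
          (e = s(u i, u (i + 1)) ∨ e = s(w i, w (i + 1)))) ∨ e = s(u 1, w 1)})
    (nU nW : ℕ → ℕ)
    (hnU : ∀ i, nU i = (H.connectedComponentMk (u i)).supp.ncard)
    (hnW : ∀ i, nW i = (H.connectedComponentMk (w i)).supp.ncard)
    -- sizes interlace weakly decreasingly outward from `u 1`
    (hsizes : ∀ i, 1 ≤ i → i ≤ m →
      nW i ≤ nU i ∧ (i + 1 ≤ m → nU (i + 1) ≤ nW i))
    -- degrees interlace weakly decreasingly outward from `u 1`
    (hdegs : ∀ i, 1 ≤ i → i ≤ m →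
      deg G (w i) ≤ deg G (u i) ∧ (i + 1 ≤ m → deg G (u (i + 1)) ≤ deg G (w i))) :
    ∀ i, 1 ≤ i → i ≤ m →
      totalDist G (u 1) ≤ totalDist G (u i) ∧
      totalDist G (u 1) ≤ totalDist G (w i) :=
  totalDist_min_at_u1_general G hG m u w huadj hwadj hcenter hdistinct H hH nU nW hnU hnW hsizes
end
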